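/- Pressure of the mean-field Bose gas with gap, condensed branch: let β > 0, λ > 0, and let Δ ≥ 0 be such that ρ^P(β, −Δ) < ∞ (which holds for every ν ≥ 1 if Δ > 0, and for ν ≥ 3 if Δ = 0). Then for every chemical potential μ > −Δ + λ·ρ^P(β, −Δ), the mean-field pressure equals p_λ^Δ(β,μ) = (μ + Δ)²/(2λ) + p^P(β, −Δ). -/

import Mathlib

open MeasureTheory Filter

/-- Thermodynamic-limit pressure of the perfect Bose gas:
`p^P(β,μ) = -(1/(β (2π)^ν)) ∫ log(1 - e^{-β(|k|² - μ)}) dk`. -/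
noncomputable def pP (ν : ℕ) (β μ : ℝ) : ℝ :=
  -(1 / (β * (2 * Real.pi) ^ ν)) *
    ∫ k : EuclideanSpace ℝ (Fin ν), Real.log (1 - Real.exp (-(β * (‖k‖ ^ 2 - μ))))

/-- Thermodynamic-limit total density of the perfect Bose gas:
`ρ^P(β,μ) = (2π)^{-ν} ∫ (e^{β(|k|² - μ)} - 1)⁻¹ dk`. -/
noncomputable def rhoP (ν : ℕ) (β μ : ℝ) : ℝ :=
  ((2 * Real.pi) ^ ν)⁻¹ *
    ∫ k : EuclideanSpace ℝ (Fin ν), (Real.exp (β * (‖k‖ ^ 2 - μ)) - 1)⁻¹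

/-- Free energy of the perfect Bose gas with gap `Δ`:
`f^{P,Δ}(β,ρ) = sup_{μ ≤ -Δ} (ρ μ - p^P(β,μ))`. -/
noncomputable def fP (ν : ℕ) (β Δ ρ : ℝ) : ℝ :=
  sSup ((fun μ => ρ * μ - pP ν β μ) '' Set.Iic (-Δ))

/-- Grand-canonical pressure of the mean-field Bose gas with gap `Δ` and coupling `lam`:
`p_λ^Δ(β,μ) = sup_{ρ ≥ 0} (μ ρ - f^{P,Δ}(β,ρ) - λ ρ²/2)`. -/
noncomputable def pMF (ν : ℕ) (β lam Δ μ : ℝ) : ℝ :=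
  sSup ((fun ρ => μ * ρ - fP ν β Δ ρ - lam * ρ ^ 2 / 2) '' Set.Ici 0)

section Auxiliary

/-- The log integrand of the perfect-gas pressure is nonpositive (for `μ ≤ 0`). -/
lemma BoseAux.log_term_nonpos {β : ℝ} (hβ : 0 < β) (x m : ℝ) (hx : 0 ≤ x) (hm : m ≤ 0) :
    Real.log (1 - Real.exp (-(β * (x - m)))) ≤ 0 := by
  have h1 : Real.exp (-(β * (x - m))) ≤ 1 := by
    rw [Real.exp_le_one_iff]; nlinarith
  exact Real.log_nonpos (by linarith) (by linarith [Real.exp_pos (-(β * (x - m)))])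

/-- Pointwise convexity inequality for the pressure integrand. -/
lemma BoseAux.key_pointwise {β : ℝ} (hβ : 0 < β) (x a b : ℝ) (hx : 0 ≤ x) (ha : a ≤ 0)
    (hba : b ≤ a) :
    Real.log (1 - Real.exp (-(β * (x - b)))) - Real.log (1 - Real.exp (-(β * (x - a))))
      ≤ β * (a - b) * (Real.exp (β * (x - a)) - 1)⁻¹ := by
  have hxa : 0 ≤ x - a := by linarith
  rcases eq_or_lt_of_le hxa with h | h
  · have hE : Real.exp (-(β * (x - a))) = 1 := by rw [← h]; simp
    have hE' : Real.exp (β * (x - a)) = 1 := by rw [← h]; simp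
    rw [hE, hE']
    simp only [sub_self, Real.log_zero, inv_zero, mul_zero, sub_zero]
    exact BoseAux.log_term_nonpos hβ x b hx (by linarith)
  · set u := Real.exp (-(β * (x - a))) with hu_def
    set v := Real.exp (-(β * (x - b))) with hv_def
    have hu0 : 0 < u := Real.exp_pos _
    have hv0 : 0 < v := Real.exp_pos _
    have hu1 : u < 1 := by
      rw [hu_def, Real.exp_lt_one_iff]; nlinarith
    have hvu : v ≤ u := by
      apply Real.exp_le_exp.2; nlinarith
    have hv1 : v < 1 := lt_of_le_of_lt hvu hu1
    have h1u : 0 < 1 - u := by linarith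
    have h1v : 0 < 1 - v := by linarith
    have hs : 0 ≤ β * (a - b) := by nlinarith
    have hvuexp : v = u * Real.exp (-(β * (a - b))) := by
      rw [hv_def, hu_def, ← Real.exp_add]; ring_nf
    have huv : u - v ≤ u * (β * (a - b)) := by
      have := Real.add_one_le_exp (-(β * (a - b)))
      have h2 : 1 - Real.exp (-(β * (a - b))) ≤ β * (a - b) := by linarith
      calc u - v = u * (1 - Real.exp (-(β * (a - b)))) := by rw [hvuexp]; ring
        _ ≤ u * (β * (a - b)) := by nlinarith
    have hlog : Real.log (1 - v) - Real.log (1 - u) = Real.log ((1 - v) / (1 - u)) := by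
      rw [Real.log_div (by linarith) (by linarith)]
    have hlog2 : Real.log ((1 - v) / (1 - u)) ≤ (u - v) / (1 - u) := by
      have h3 := Real.log_le_sub_one_of_pos (div_pos h1v h1u)
      have heq : (1 - v) / (1 - u) - 1 = (u - v) / (1 - u) := by field_simp; ring
      linarith [heq ▸ h3]
    have hinv : (Real.exp (β * (x - a)) - 1)⁻¹ = u / (1 - u) := by
      have he : Real.exp (β * (x - a)) = u⁻¹ := by
        rw [hu_def, ← Real.exp_neg]; ring_nf
      rw [he, eq_div_iff (by linarith)]
      field_simp
    rw [hinv, hlog]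
    calc Real.log ((1 - v) / (1 - u)) ≤ (u - v) / (1 - u) := hlog2
      _ ≤ u * (β * (a - b)) / (1 - u) := by gcongr
      _ = β * (a - b) * (u / (1 - u)) := by ring

/-- Integrability of the pressure integrand, dominated by the density integrand. -/
lemma BoseAux.log_integrable {ν : ℕ} (hν : 1 ≤ ν) {β Δ : ℝ} (hβ : 0 < β) (hΔ : 0 ≤ Δ)
    (hfin : Integrable (fun k : EuclideanSpace ℝ (Fin ν) =>
      (Real.exp (β * (‖k‖ ^ 2 + Δ)) - 1)⁻¹))
    (b : ℝ) (hb : b ≤ -Δ) :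
    Integrable (fun k : EuclideanSpace ℝ (Fin ν) =>
      Real.log (1 - Real.exp (-(β * (‖k‖ ^ 2 - b))))) := by
  haveI : Nontrivial (EuclideanSpace ℝ (Fin ν)) := by
    have : Nonempty (Fin ν) := ⟨⟨0, hν⟩⟩
    infer_instance
  apply hfin.mono'
  · apply Measurable.aestronglyMeasurable
    apply Real.measurable_log.comp
    fun_prop
  · have hnull : (volume : Measure (EuclideanSpace ℝ (Fin ν))) {0} = 0 := measure_singleton 0
    filter_upwards [measure_eq_zero_iff_ae_notMem.mp hnull] with k hk
    have hx : 0 < ‖k‖ ^ 2 := by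
      have h0 : k ≠ 0 := hk
      have := norm_pos_iff.mpr h0
      positivity
    set x := ‖k‖ ^ 2
    have hxb : 0 < x - b := by nlinarith
    set u := Real.exp (-(β * (x - b))) with hu_def
    have hu0 : 0 < u := Real.exp_pos _
    have hu1 : u < 1 := by rw [hu_def, Real.exp_lt_one_iff]; nlinarith
    have h1u : 0 < 1 - u := by linarith
    have hlognp : Real.log (1 - u) ≤ 0 :=
      BoseAux.log_term_nonpos hβ x b (le_of_lt hx) (by linarith)
    rw [Real.norm_eq_abs, abs_of_nonpos hlognp]
    have step1 : -Real.log (1 - u) ≤ u / (1 - u) := by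
      rw [← Real.log_inv]
      have h3 := Real.log_le_sub_one_of_pos (inv_pos.mpr h1u)
      have : (1 - u)⁻¹ - 1 = u / (1 - u) := by field_simp; ring
      linarith [this ▸ h3]
    have step2 : (Real.exp (β * (x - b)) - 1)⁻¹ = u / (1 - u) := by
      have he : Real.exp (β * (x - b)) = u⁻¹ := by rw [hu_def, ← Real.exp_neg]; ring_nf
      rw [he, eq_div_iff (by linarith)]
      field_simp
    have step3 : (Real.exp (β * (x - b)) - 1)⁻¹ ≤ (Real.exp (β * (x + Δ)) - 1)⁻¹ := by
      have h4 : 0 < Real.exp (β * (x + Δ)) - 1 := by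
        have h6 : (0:ℝ) < β * (x + Δ) := by nlinarith
        nlinarith [Real.add_one_le_exp (β * (x + Δ))]
      have h5 : Real.exp (β * (x + Δ)) - 1 ≤ Real.exp (β * (x - b)) - 1 := by
        have : Real.exp (β * (x + Δ)) ≤ Real.exp (β * (x - b)) := by
          apply Real.exp_le_exp.2; nlinarith
        linarith
      exact inv_anti₀ h4 h5
    rw [← step2] at step1
    linarith [step3, step1]

/-- The perfect-gas pressure is nonnegative for nonpositive chemical potential. -/
lemma BoseAux.pP_nonneg (ν : ℕ) {β : ℝ} (hβ : 0 < β) {m : ℝ} (hm : m ≤ 0) : 0 ≤ pP ν β m := by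
  have hI : (∫ k : EuclideanSpace ℝ (Fin ν),
      Real.log (1 - Real.exp (-(β * (‖k‖ ^ 2 - m))))) ≤ 0 := by
    apply integral_nonpos
    intro k
    exact BoseAux.log_term_nonpos hβ _ m (by positivity) hm
  have hc : 0 < 1 / (β * (2 * Real.pi) ^ ν) := by positivity
  unfold pP
  nlinarith

/-- The perfect-gas density is nonnegative at `μ = -Δ`. -/
lemma BoseAux.rhoP_nonneg (ν : ℕ) {β Δ : ℝ} (hβ : 0 < β) (hΔ : 0 ≤ Δ) :
    0 ≤ rhoP ν β (-Δ) := by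
  unfold rhoP
  apply mul_nonneg (by positivity)
  apply integral_nonneg
  intro k
  have h1 : (0:ℝ) ≤ β * (‖k‖ ^ 2 - -Δ) := by
    have : (0:ℝ) ≤ ‖k‖ ^ 2 := by positivity
    nlinarith
  exact inv_nonneg.mpr (by linarith [Real.one_le_exp h1])

/-- Key convexity estimate: `p^P(β,-Δ) - p^P(β,b) ≤ ρ^P(β,-Δ)(-Δ-b)` for `b ≤ -Δ`. -/
lemma BoseAux.pP_sub_le {ν : ℕ} (hν : 1 ≤ ν) {β Δ : ℝ} (hβ : 0 < β) (hΔ : 0 ≤ Δ)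
    (hfin : Integrable (fun k : EuclideanSpace ℝ (Fin ν) =>
      (Real.exp (β * (‖k‖ ^ 2 + Δ)) - 1)⁻¹))
    (b : ℝ) (hb : b ≤ -Δ) :
    pP ν β (-Δ) - pP ν β b ≤ rhoP ν β (-Δ) * (-Δ - b) := by
  have hIa := BoseAux.log_integrable hν hβ hΔ hfin (-Δ) le_rfl
  have hIb := BoseAux.log_integrable hν hβ hΔ hfin b hb
  have hpt : ∀ k : EuclideanSpace ℝ (Fin ν),
      Real.log (1 - Real.exp (-(β * (‖k‖ ^ 2 - b))))
        - Real.log (1 - Real.exp (-(β * (‖k‖ ^ 2 - -Δ))))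
      ≤ β * (-Δ - b) * (Real.exp (β * (‖k‖ ^ 2 + Δ)) - 1)⁻¹ := by
    intro k
    have := BoseAux.key_pointwise hβ (‖k‖ ^ 2) (-Δ) b (by positivity) (by linarith) hb
    calc Real.log (1 - Real.exp (-(β * (‖k‖ ^ 2 - b))))
          - Real.log (1 - Real.exp (-(β * (‖k‖ ^ 2 - -Δ))))
        ≤ β * (-Δ - b) * (Real.exp (β * (‖k‖ ^ 2 - -Δ)) - 1)⁻¹ := this
      _ = β * (-Δ - b) * (Real.exp (β * (‖k‖ ^ 2 + Δ)) - 1)⁻¹ := by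
          rw [sub_neg_eq_add]
  have hmono := integral_mono (hIb.sub hIa) (hfin.const_mul (β * (-Δ - b))) hpt
  simp only [Pi.sub_apply] at hmono
  rw [integral_sub hIb hIa, integral_const_mul] at hmono
  set Ia := ∫ k : EuclideanSpace ℝ (Fin ν),
    Real.log (1 - Real.exp (-(β * (‖k‖ ^ 2 - -Δ)))) with hIa_def
  set Ib := ∫ k : EuclideanSpace ℝ (Fin ν),
    Real.log (1 - Real.exp (-(β * (‖k‖ ^ 2 - b)))) with hIb_def
  set D := ∫ k : EuclideanSpace ℝ (Fin ν),
    (Real.exp (β * (‖k‖ ^ 2 + Δ)) - 1)⁻¹ with hD_def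
  have hrho : rhoP ν β (-Δ) = ((2 * Real.pi) ^ ν)⁻¹ * D := by
    unfold rhoP
    rw [hD_def]
    congr 1
    apply integral_congr_ae
    filter_upwards with k
    rw [sub_neg_eq_add]
  have hπ : (0:ℝ) < (2 * Real.pi) ^ ν := by positivity
  have hpa : pP ν β (-Δ) = -(1 / (β * (2 * Real.pi) ^ ν)) * Ia := rfl
  have hpb : pP ν β b = -(1 / (β * (2 * Real.pi) ^ ν)) * Ib := rfl
  rw [hpa, hpb, hrho]
  have hcoef : 0 ≤ 1 / (β * (2 * Real.pi) ^ ν) := by positivity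
  have h1 : (1 / (β * (2 * Real.pi) ^ ν)) * (Ib - Ia)
      ≤ (1 / (β * (2 * Real.pi) ^ ν)) * (β * (-Δ - b) * D) :=
    mul_le_mul_of_nonneg_left hmono hcoef
  have h2 : (1 / (β * (2 * Real.pi) ^ ν)) * (β * (-Δ - b) * D)
      = ((2 * Real.pi) ^ ν)⁻¹ * D * (-Δ - b) := by
    field_simp
  nlinarith [h1, h2]

end Auxiliary

/-- **Pressure of the mean-field Bose gas with gap, condensed branch.** Let `β > 0`,
`λ > 0`, `Δ ≥ 0` with `ρ^P(β,-Δ) < ∞` (encoded by integrability of the density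
integrand at `μ = -Δ`). Then for every `μ > -Δ + λ ρ^P(β,-Δ)`,
`p_λ^Δ(β,μ) = (μ + Δ)²/(2λ) + p^P(β,-Δ)`. -/
theorem mean_field_pressure_condensed_branch
    (ν : ℕ) (hν : 1 ≤ ν) (β : ℝ) (hβ : 0 < β) (lam : ℝ) (hlam : 0 < lam)
    (Δ : ℝ) (hΔ : 0 ≤ Δ)
    (hfin : Integrable (fun k : EuclideanSpace ℝ (Fin ν) =>
      (Real.exp (β * (‖k‖ ^ 2 + Δ)) - 1)⁻¹))
    (μ : ℝ) (hμ : -Δ + lam * rhoP ν β (-Δ) < μ) :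
    pMF ν β lam Δ μ = (μ + Δ) ^ 2 / (2 * lam) + pP ν β (-Δ) := by
  have hρ0 : 0 ≤ rhoP ν β (-Δ) := BoseAux.rhoP_nonneg ν hβ hΔ
  have hkey := BoseAux.pP_sub_le hν hβ hΔ hfin
  -- Facts about fP
  have hS_bdd : ∀ ρ : ℝ, 0 ≤ ρ →
      ∀ y ∈ (fun m => ρ * m - pP ν β m) '' Set.Iic (-Δ), y ≤ 0 := by
    rintro ρ hρ y ⟨m, hm, rfl⟩
    have hm0 : m ≤ 0 := by simp only [Set.mem_Iic] at hm; linarith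
    have h1 : ρ * m ≤ 0 := mul_nonpos_of_nonneg_of_nonpos hρ hm0
    have h2 : 0 ≤ pP ν β m := BoseAux.pP_nonneg ν hβ hm0
    simp only
    linarith
  have hS_ne : ∀ ρ : ℝ, ((fun m => ρ * m - pP ν β m) '' Set.Iic (-Δ)).Nonempty :=
    fun ρ => ⟨_, ⟨-Δ, Set.self_mem_Iic, rfl⟩⟩
  have hfP_ge : ∀ ρ : ℝ, 0 ≤ ρ → ρ * (-Δ) - pP ν β (-Δ) ≤ fP ν β Δ ρ := by
    intro ρ hρ
    exact le_csSup ⟨0, fun y hy => hS_bdd ρ hρ y hy⟩ ⟨-Δ, Set.self_mem_Iic, rfl⟩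
  have hfP_le : ∀ ρ : ℝ, rhoP ν β (-Δ) ≤ ρ → fP ν β Δ ρ ≤ ρ * (-Δ) - pP ν β (-Δ) := by
    intro ρ hρ
    apply csSup_le (hS_ne ρ)
    rintro y ⟨m, hm, rfl⟩
    simp only [Set.mem_Iic] at hm
    have h1 := hkey m hm
    have h2 : rhoP ν β (-Δ) * (-Δ - m) ≤ ρ * (-Δ - m) := by
      apply mul_le_mul_of_nonneg_right hρ (by linarith)
    simp only
    nlinarith
  -- Facts about pMF
  set M := (μ + Δ) ^ 2 / (2 * lam) + pP ν β (-Δ) with hM_def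
  have hT_bdd : ∀ y ∈ (fun ρ => μ * ρ - fP ν β Δ ρ - lam * ρ ^ 2 / 2) '' Set.Ici 0, y ≤ M := by
    rintro y ⟨ρ, hρ, rfl⟩
    simp only [Set.mem_Ici] at hρ
    have h1 := hfP_ge ρ hρ
    have hq : (μ + Δ) * ρ - lam * ρ ^ 2 / 2 ≤ (μ + Δ) ^ 2 / (2 * lam) := by
      have heq : (μ + Δ) ^ 2 / (2 * lam) - ((μ + Δ) * ρ - lam * ρ ^ 2 / 2)
          = (lam * ρ - (μ + Δ)) ^ 2 / (2 * lam) := by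
        field_simp
        ring
      have hpos : 0 ≤ (lam * ρ - (μ + Δ)) ^ 2 / (2 * lam) := by positivity
      linarith
    simp only [hM_def]
    nlinarith
  have hT_ne : ((fun ρ => μ * ρ - fP ν β Δ ρ - lam * ρ ^ 2 / 2) '' Set.Ici 0).Nonempty :=
    ⟨_, ⟨0, Set.self_mem_Ici, rfl⟩⟩
  apply le_antisymm
  · exact csSup_le hT_ne hT_bdd
  · -- lower bound via ρ* = (μ+Δ)/lam
    set ρs := (μ + Δ) / lam with hρs_def
    have hρs_gt : rhoP ν β (-Δ) ≤ ρs := by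
      rw [hρs_def, le_div_iff₀ hlam]
      nlinarith
    have hρs0 : 0 ≤ ρs := le_trans hρ0 hρs_gt
    have hfPs : fP ν β Δ ρs = ρs * (-Δ) - pP ν β (-Δ) :=
      le_antisymm (hfP_le ρs hρs_gt) (hfP_ge ρs hρs0)
    have hval : μ * ρs - fP ν β Δ ρs - lam * ρs ^ 2 / 2 = M := by
      rw [hfPs, hM_def, hρs_def]
      field_simp
      ring
    calc M = μ * ρs - fP ν β Δ ρs - lam * ρs ^ 2 / 2 := hval.symm
      _ ≤ pMF ν β lam Δ μ :=
        le_csSup ⟨M, hT_bdd⟩ ⟨ρs, Set.mem_Ici.mpr hρs0, rfl⟩
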